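/- Let m ≥ 2 and let P be an m×m row-stochastic matrix with all entries strictly positive. If u* ∈ Δ^m maximizes φ(·;P) over Δ^m, i.e. φ(u*;P) = C(P), then for every z with u*_z > 0 one has D(P_z ‖ u*ᵀP) = C(P), and for every z with u*_z = 0 one has D(P_z ‖ u*ᵀP) ≤ C(P), where D(p‖q) = ∑_y p_y log₂(p_y/q_y) is the Kullback–Leibler divergence between probability vectors p and q. -/
import Mathlib


open Finset

/-- The probability simplex Δ^m. -/
def simplex (m : ℕ) : Set (Fin m → ℝ) :=
  {u | (∀ z, 0 ≤ u z) ∧ ∑ z, u z = 1}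

/-- Shannon entropy (base 2) of a nonnegative vector, with `0 · log₂ 0 = 0`. -/
noncomputable def entH {m : ℕ} (v : Fin m → ℝ) : ℝ :=
  ∑ y, -(v y * Real.logb 2 (v y))

/-- The channel function φ(u;P) = h(uᵀP) − ∑_z u_z h(P_z). -/
noncomputable def phi {m : ℕ} (u : Fin m → ℝ) (P : Matrix (Fin m) (Fin m) ℝ) : ℝ :=
  entH (fun y => ∑ z, u z * P z y) - ∑ z, u z * entH (P z)

/-- The channel capacity C(P) = sup_{u ∈ Δ^m} φ(u;P). -/
noncomputable def cap {m : ℕ} (P : Matrix (Fin m) (Fin m) ℝ) : ℝ :=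
  sSup ((fun u => phi u P) '' simplex m)

/-- Kullback–Leibler divergence (base 2) between probability vectors. -/
noncomputable def KLdiv {m : ℕ} (p q : Fin m → ℝ) : ℝ :=
  ∑ y, p y * Real.logb 2 (p y / q y)

lemma exists_pos_of_simplex {m : ℕ} {v : Fin m → ℝ} (hv : v ∈ simplex m) : ∃ w, 0 < v w := by
  by_contra h
  push_neg at h
  have h0 : ∑ z, v z = 0 := Finset.sum_eq_zero fun z _ => le_antisymm (h z) (hv.1 z)
  rw [hv.2] at h0; norm_num at h0

lemma mix_pos {m : ℕ} {P : Matrix (Fin m) (Fin m) ℝ} (hPpos : ∀ z y, 0 < P z y)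
    {v : Fin m → ℝ} (hv : v ∈ simplex m) (y : Fin m) : 0 < ∑ w, v w * P w y := by
  obtain ⟨w, hw⟩ := exists_pos_of_simplex hv
  exact Finset.sum_pos' (fun i _ => mul_nonneg (hv.1 i) (hPpos i y).le)
    ⟨w, Finset.mem_univ w, mul_pos hw (hPpos w y)⟩

lemma mix_sum {m : ℕ} {P : Matrix (Fin m) (Fin m) ℝ} (hProw : ∀ z, ∑ y, P z y = 1)
    {v : Fin m → ℝ} (hv : v ∈ simplex m) : ∑ y, ∑ w, v w * P w y = 1 := by
  rw [Finset.sum_comm]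
  simp_rw [← Finset.mul_sum, hProw, mul_one]
  exact hv.2

lemma negmullog_nonneg {x : ℝ} (h0 : 0 ≤ x) (h1 : x ≤ 1) : 0 ≤ -(x * Real.logb 2 x) := by
  have := Real.logb_nonpos (b := 2) one_lt_two h0 h1
  nlinarith

lemma negmullog_le_two {x : ℝ} (h0 : 0 ≤ x) : -(x * Real.logb 2 x) ≤ 2 := by
  rcases h0.eq_or_lt with h | h
  · simp [← h]
  have h1 : Real.log x⁻¹ ≤ x⁻¹ - 1 := Real.log_le_sub_one_of_pos (by positivity)
  rw [Real.log_inv] at h1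
  have hxinv : x * x⁻¹ = 1 := mul_inv_cancel₀ h.ne'
  have h2 : -(x * Real.log x) ≤ 1 - x := by nlinarith
  have hlog2 : (0.6 : ℝ) < Real.log 2 := by
    have := Real.log_two_gt_d9; linarith
  have key : -(x * Real.logb 2 x) = (-(x * Real.log x)) / Real.log 2 := by
    rw [Real.logb]; ring
  rw [key, div_le_iff₀ (by linarith)]
  nlinarith

lemma entH_nonneg {m : ℕ} {v : Fin m → ℝ} (h0 : ∀ y, 0 ≤ v y) (h1 : ∀ y, v y ≤ 1) :
    0 ≤ entH v :=
  Finset.sum_nonneg fun y _ => negmullog_nonneg (h0 y) (h1 y)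

lemma entH_le {m : ℕ} {v : Fin m → ℝ} (h0 : ∀ y, 0 ≤ v y) : entH v ≤ 2 * m := by
  calc entH v ≤ ∑ _y : Fin m, (2 : ℝ) := Finset.sum_le_sum fun y _ => negmullog_le_two (h0 y)
  _ = 2 * m := by simp [mul_comm]

lemma phi_bdd {m : ℕ} {P : Matrix (Fin m) (Fin m) ℝ} (hPpos : ∀ z y, 0 < P z y)
    (hProw : ∀ z, ∑ y, P z y = 1) : BddAbove ((fun u => phi u P) '' simplex m) := by
  refine ⟨2 * m, ?_⟩
  rintro x ⟨v, hv, rfl⟩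
  have h1 : entH (fun y => ∑ w, v w * P w y) ≤ 2 * m :=
    entH_le (fun y => Finset.sum_nonneg fun w _ => mul_nonneg (hv.1 w) (hPpos w y).le)
  have h2 : 0 ≤ ∑ z, v z * entH (P z) := by
    refine Finset.sum_nonneg fun z _ => mul_nonneg (hv.1 z) (entH_nonneg (fun y => (hPpos z y).le) ?_)
    intro y
    exact le_trans (Finset.single_le_sum (f := P z) (fun i _ => (hPpos z i).le) (Finset.mem_univ y)) (hProw z).le
  simp only [phi]; linarith

lemma phi_add_kl {m : ℕ} {P : Matrix (Fin m) (Fin m) ℝ} (hPpos : ∀ z y, 0 < P z y)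
    {q : Fin m → ℝ} (hq : ∀ y, 0 < q y) {v : Fin m → ℝ} (hv : v ∈ simplex m) :
    phi v P + KLdiv (fun y => ∑ w, v w * P w y) q = ∑ z, v z * KLdiv (P z) q := by
  set Q : Fin m → ℝ := fun y => ∑ w, v w * P w y with hQdef
  have hQpos : ∀ y, 0 < Q y := fun y => mix_pos hPpos hv y
  have hKLQ : KLdiv Q q = ∑ y, Q y * Real.logb 2 (Q y) - ∑ y, Q y * Real.logb 2 (q y) := by
    unfold KLdiv
    rw [← Finset.sum_sub_distrib]
    refine Finset.sum_congr rfl fun y _ => ?_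
    rw [Real.logb_div (hQpos y).ne' (hq y).ne']; ring
  have hKLP : ∀ z, KLdiv (P z) q
      = ∑ y, P z y * Real.logb 2 (P z y) - ∑ y, P z y * Real.logb 2 (q y) := by
    intro z
    unfold KLdiv
    rw [← Finset.sum_sub_distrib]
    refine Finset.sum_congr rfl fun y _ => ?_
    rw [Real.logb_div (hPpos z y).ne' (hq y).ne']; ring
  have hswap : ∑ z, v z * ∑ y, P z y * Real.logb 2 (q y) = ∑ y, Q y * Real.logb 2 (q y) := by
    simp_rw [hQdef, Finset.mul_sum, Finset.sum_mul]
    rw [Finset.sum_comm]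
    exact Finset.sum_congr rfl fun y _ => Finset.sum_congr rfl fun z _ => by ring
  rw [hKLQ]
  simp_rw [hKLP]
  unfold phi entH
  rw [hQdef] at *
  simp only [mul_sub, Finset.sum_sub_distrib, Finset.sum_neg_distrib, mul_neg,
    ← Finset.mul_sum]
  linarith [hswap]

lemma kl_le_chi {m : ℕ} {p q : Fin m → ℝ} (hp : ∀ y, 0 ≤ p y) (hq : ∀ y, 0 < q y)
    (hsum : ∑ y, p y = ∑ y, q y) :
    KLdiv p q ≤ (∑ y, (p y - q y) ^ 2 / q y) / Real.log 2 := by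
  have hlog2 : 0 < Real.log 2 := Real.log_pos one_lt_two
  have key : ∑ y, p y * Real.log (p y / q y) ≤ ∑ y, (p y - q y) ^ 2 / q y := by
    have h1 : ∀ y : Fin m, p y * Real.log (p y / q y) ≤ p y * (p y - q y) / q y := by
      intro y
      rcases (hp y).eq_or_lt with h | h
      · simp [← h]
      · have hl := Real.log_le_sub_one_of_pos (div_pos h (hq y))
        have hqy := hq y
        calc p y * Real.log (p y / q y) ≤ p y * (p y / q y - 1) := by nlinarith
        _ = p y * (p y - q y) / q y := by field_simp
    calc ∑ y, p y * Real.log (p y / q y) ≤ ∑ y, p y * (p y - q y) / q y :=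
          Finset.sum_le_sum fun y _ => h1 y
    _ = ∑ y, ((p y - q y) ^ 2 / q y + (p y - q y)) := by
        refine Finset.sum_congr rfl fun y _ => ?_
        have := (hq y).ne'
        field_simp
        ring
    _ = ∑ y, (p y - q y) ^ 2 / q y := by
        rw [Finset.sum_add_distrib, Finset.sum_sub_distrib, hsum]
        simp
  have hrw : KLdiv p q = (∑ y, p y * Real.log (p y / q y)) / Real.log 2 := by
    unfold KLdiv
    rw [Finset.sum_div]
    refine Finset.sum_congr rfl fun y _ => ?_
    rw [Real.logb]; ring
  rw [hrw]
  exact div_le_div_of_nonneg_right key hlog2.le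


theorem kkt_capacity {m : ℕ} (hm : 2 ≤ m) (P : Matrix (Fin m) (Fin m) ℝ)
    (hPpos : ∀ z y, 0 < P z y) (hProw : ∀ z, ∑ y, P z y = 1)
    (ustar : Fin m → ℝ) (hustar : ustar ∈ simplex m)
    (hopt : phi ustar P = cap P) :
    ∀ z : Fin m,
      (0 < ustar z → KLdiv (P z) (fun y => ∑ w, ustar w * P w y) = cap P) ∧
      (ustar z = 0 → KLdiv (P z) (fun y => ∑ w, ustar w * P w y) ≤ cap P) := by
  have hnn := hustar.1
  have hsum1 := hustar.2
  have hqpos : ∀ y, 0 < ∑ w, ustar w * P w y := fun y => mix_pos hPpos hustar y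
  have hqsum : ∑ y, ∑ w, ustar w * P w y = 1 := mix_sum hProw hustar
  set q : Fin m → ℝ := fun y => ∑ w, ustar w * P w y with hqdef
  have hbdd := phi_bdd hPpos hProw
  have hle : ∀ v ∈ simplex m, phi v P ≤ cap P := fun v hv => le_csSup hbdd ⟨v, hv, rfl⟩
  have hKLqq : KLdiv q q = 0 := by
    unfold KLdiv
    refine Finset.sum_eq_zero fun y _ => ?_
    rw [div_self (hqpos y).ne', Real.logb_one, mul_zero]
  have hbase : ∑ w, ustar w * KLdiv (P w) q = cap P := by
    have h := phi_add_kl hPpos hqpos hustar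
    rw [hKLqq, add_zero, hopt] at h
    linarith
  intro z
  set D := KLdiv (P z) q with hD
  set K := (∑ y, (P z y - q y) ^ 2 / q y) / Real.log 2 with hK
  have hKnn : 0 ≤ K := by
    apply div_nonneg _ (Real.log_nonneg one_le_two)
    exact Finset.sum_nonneg fun y _ => div_nonneg (sq_nonneg _) (hqpos y).le
  have hmain : ∀ s : ℝ, (∀ w, 0 ≤ (1 - s) * ustar w + s * (if w = z then 1 else 0)) →
      (1 - s) * cap P + s * D ≤ cap P + s ^ 2 * K := by
    intro s hsnn
    set v : Fin m → ℝ := fun w => (1 - s) * ustar w + s * (if w = z then 1 else 0) with hvdef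
    have hvs : v ∈ simplex m := by
      refine ⟨hsnn, ?_⟩
      simp only [hvdef, Finset.sum_add_distrib, ← Finset.mul_sum, hsum1]
      simp
    have hQ : ∀ y, ∑ w, v w * P w y = (1 - s) * q y + s * P z y := by
      intro y
      simp only [hvdef, add_mul, Finset.sum_add_distrib, mul_assoc, ← Finset.mul_sum]
      congr 1
      simp
    have hklle : KLdiv (fun y => ∑ w, v w * P w y) q ≤ s ^ 2 * K := by
      have hb := kl_le_chi (p := fun y => ∑ w, v w * P w y) (q := q)
        (fun y => Finset.sum_nonneg fun w _ => mul_nonneg (hvs.1 w) (hPpos w y).le) hqpos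
        (by rw [mix_sum hProw hvs, hqsum])
      refine hb.trans ?_
      have hnum : ∑ y, ((∑ w, v w * P w y) - q y) ^ 2 / q y
          = s ^ 2 * ∑ y, (P z y - q y) ^ 2 / q y := by
        rw [Finset.mul_sum]
        refine Finset.sum_congr rfl fun y _ => ?_
        rw [hQ y]
        have := (hqpos y).ne'
        field_simp
        ring
      rw [hK, hnum]
      rw [mul_div_assoc]
    have hsplit : ∑ w, v w * KLdiv (P w) q = (1 - s) * cap P + s * D := by
      simp only [hvdef, add_mul, Finset.sum_add_distrib, mul_assoc, ← Finset.mul_sum]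
      rw [hbase]
      congr 1
      simp [hD]
    have hid := phi_add_kl hPpos hqpos hvs
    have hphile := hle v hvs
    rw [hsplit] at hid
    linarith
  have claim1 : D ≤ cap P := by
    refine le_of_forall_pos_le_add fun ε hε => ?_
    set t := min 1 (ε / (K + 1)) with htd
    have ht0 : 0 < t := lt_min one_pos (div_pos hε (by linarith))
    have ht1 : t ≤ 1 := min_le_left _ _
    have hineq := hmain t (fun x => by
      by_cases hx : x = z
      · simp only [hx, if_pos]
        nlinarith [hnn z, ht0, ht1]
      · simp only [if_neg hx, mul_zero, add_zero]
        nlinarith [hnn x, ht0, ht1])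
    have htK : t * K ≤ ε := by
      have h2 : t ≤ ε / (K + 1) := min_le_right _ _
      have h3 : t * K ≤ (ε / (K + 1)) * K := mul_le_mul_of_nonneg_right h2 hKnn
      have h4 : (ε / (K + 1)) * K ≤ ε := by
        rw [div_mul_eq_mul_div, div_le_iff₀ (by linarith : (0:ℝ) < K + 1)]
        nlinarith
      linarith
    nlinarith [mul_le_mul_of_nonneg_left htK ht0.le, hineq, ht0]
  refine ⟨fun hz => ?_, fun _ => claim1⟩
  have hCleD : cap P ≤ D := by
    refine le_of_forall_pos_le_add fun ε hε => ?_
    set t := min (ustar z) (ε / (K + 1)) with htd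
    have ht0 : 0 < t := lt_min hz (div_pos hε (by linarith))
    have htu : t ≤ ustar z := min_le_left _ _
    have hineq := hmain (-t) (fun x => by
      by_cases hx : x = z
      · simp only [hx, if_pos]
        nlinarith [hnn z, ht0, htu]
      · simp only [if_neg hx, mul_zero, add_zero]
        nlinarith [hnn x, ht0])
    have htK : t * K ≤ ε := by
      have h2 : t ≤ ε / (K + 1) := min_le_right _ _
      have h3 : t * K ≤ (ε / (K + 1)) * K := mul_le_mul_of_nonneg_right h2 hKnn
      have h4 : (ε / (K + 1)) * K ≤ ε := by
        rw [div_mul_eq_mul_div, div_le_iff₀ (by linarith : (0:ℝ) < K + 1)]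
        nlinarith
      linarith
    nlinarith [mul_le_mul_of_nonneg_left htK ht0.le, hineq, ht0]
  linarith
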